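/- arXiv:1201.0658 — 2 statements merged into one kernel-verified Lean document; each statement's English description precedes it below -/
import Mathlib

section
/- For w(x) = x(1 + L(log x)) for x ≥ 1 (where L is the Lambert W function, L(x)e^{L(x)} = x), one has w(W⁻¹(y)) / w(W⁻¹(y+α)) ∼ e^{-α}/y^α as y → ∞, for every α > 0. Consequently α_c(w) = 1. -/
/-!
Since `L (z log z) = log z` for `z ≥ 1`, the map `z ↦ z ^ z` has derivative
`z ^ z (1 + log z) = w (z ^ z)`; hence `W (z ^ z) = z - c` for a constant `c`, i.e.
`W⁻¹(y) = (y + c) ^ (y + c)` and `w (W⁻¹ y) = (y + c) ^ (y + c) (1 + log (y + c))` for large `y`.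
The asymptotics of `w (W⁻¹ y) / w (W⁻¹ (y + α))` then reduce to `(1 + α / z) ^ z → e ^ α`.
Substituting `x = W⁻¹ y` in `I_α` (so `dx = w (W⁻¹ y) dy`) turns its tail into
`∫ w (W⁻¹ y) / w (W⁻¹ (y + α)) dy`, comparable to `∫ y ^ (-α) dy`, which is finite iff `α > 1`.
-/

open MeasureTheory Filter Topology Set
open scoped ENNReal NNReal

noncomputable section

/-- Extension of a weight sequence to the reals: `w(t) = w(⌊t⌋)` (and `w 0` for `t < 0`). -/
def wext (w : ℕ → ℝ) (t : ℝ) : ℝ := w ⌊t⌋₊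

/-- `W(t) = ∫₀ᵗ du / w(u)`. -/
def Wfun (v : ℝ → ℝ) (t : ℝ) : ℝ := ∫ u in (0:ℝ)..t, (v u)⁻¹

/-- `I_α(w) = ∫₀^∞ dx / w(W⁻¹(W(x)+α))`, valued in `[0,∞]`. -/
def Ia (v : ℝ → ℝ) (Winv : ℝ → ℝ) (α : ℝ) : ℝ≥0∞ :=
  ∫⁻ x in Ioi (0:ℝ), ENNReal.ofReal (v (Winv (Wfun v x + α)))⁻¹

/-- The critical parameter `α_c(w) = inf {α ≥ 0 : I_α(w) < ∞} ∈ [0,∞]` (inf ∅ = ∞). -/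
def alphac (v : ℝ → ℝ) (Winv : ℝ → ℝ) : ℝ≥0∞ :=
  sInf (ENNReal.ofReal '' {α : ℝ | 0 < α ∧ Ia v Winv α < ⊤})

open Real

def rpowSelfDeriv (z : ℝ) : ℝ := z ^ z * (1 + log z)

theorem hasDerivAt_rpow_self {z : ℝ} (hz : 0 < z) :
    HasDerivAt (fun x : ℝ => x ^ x) (rpowSelfDeriv z) z := by
  convert (hasDerivAt_id' z).rpow (hasDerivAt_id' z) hz using 1
  rw [rpowSelfDeriv, rpow_sub_one hz.ne']
  field_simp

theorem rpowSelfDeriv_pos {z : ℝ} (hz : 1 ≤ z) : 0 < rpowSelfDeriv z :=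
  mul_pos (by positivity) (by linarith [log_nonneg hz])

theorem strictMonoOn_rpow_self : StrictMonoOn (fun x : ℝ => x ^ x) (Ici 1) := by
  intro a ha b hb hab
  calc a ^ a < b ^ a := rpow_lt_rpow (by linarith [mem_Ici.1 ha]) hab (by linarith [mem_Ici.1 ha])
    _ ≤ b ^ b := rpow_le_rpow_of_exponent_le (by linarith [mem_Ici.1 ha]) hab.le

theorem tendsto_rpow_self_atTop : Tendsto (fun x : ℝ => x ^ x) atTop atTop := by
  refine tendsto_atTop_mono' atTop ?_ tendsto_id
  filter_upwards [eventually_ge_atTop 1] with x hx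
  simpa using rpow_le_rpow_of_exponent_le hx hx

theorem tendsto_one_add_log_div_one_add_log_add (α : ℝ) :
    Tendsto (fun z => (1 + log z) / (1 + log (z + α))) atTop (𝓝 1) := by
  have hden : Tendsto (fun z => 1 + log (z + α)) atTop atTop :=
    tendsto_atTop_add_const_left _ 1
      (tendsto_log_atTop.comp (tendsto_atTop_add_const_right _ α tendsto_id))
  have hlim := tendsto_const_nhds (x := (1 : ℝ)).sub
    ((tendsto_log_comp_add_sub_log α).div_atTop hden)
  rw [sub_zero] at hlim
  refine hlim.congr' ?_
  filter_upwards [hden.eventually_gt_atTop 0] with z hz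
  field_simp
  ring

theorem rpowSelfDeriv_div_rpowSelfDeriv_add {z α : ℝ} (hz : 0 < z) (hzα : 0 < z + α) :
    rpowSelfDeriv z / rpowSelfDeriv (z + α) * (z + α) ^ α
      = ((1 + α / z) ^ z)⁻¹ * ((1 + log z) / (1 + log (z + α))) := by
  have hsplit : (z + α) ^ (z + α) = (z + α) ^ z * (z + α) ^ α := rpow_add hzα z α
  have hbase : (1 + α / z) ^ z = (z + α) ^ z / z ^ z := by
    rw [← div_rpow hzα.le hz.le, add_div, div_self hz.ne']
  rw [rpowSelfDeriv, rpowSelfDeriv, hsplit, hbase]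
  have : 0 < z ^ z := rpow_pos_of_pos hz z
  have : 0 < (z + α) ^ z := rpow_pos_of_pos hzα z
  have : 0 < (z + α) ^ α := rpow_pos_of_pos hzα α
  field_simp

theorem tendsto_rpowSelfDeriv_div_rpowSelfDeriv_add (α : ℝ) :
    Tendsto (fun z => rpowSelfDeriv z / rpowSelfDeriv (z + α) * (z + α) ^ α) atTop
      (𝓝 (exp (-α))) := by
  have hlim := ((tendsto_one_add_div_rpow_exp α).inv₀ (exp_pos α).ne').mul
    (tendsto_one_add_log_div_one_add_log_add α)
  rw [mul_one, ← exp_neg] at hlim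
  refine hlim.congr' ?_
  filter_upwards [eventually_gt_atTop 0, eventually_gt_atTop (-α)] with z hz hzα
  rw [rpowSelfDeriv_div_rpowSelfDeriv_add hz (by linarith)]

theorem tendsto_rpowSelfDeriv_shift_ratio (c α : ℝ) :
    Tendsto (fun y => rpowSelfDeriv (y + c) / rpowSelfDeriv (y + α + c) / (exp (-α) / y ^ α))
      atTop (𝓝 1) := by
  have hshift := (tendsto_rpowSelfDeriv_div_rpowSelfDeriv_add α).comp
    (tendsto_atTop_add_const_right _ c tendsto_id)
  have hbase : Tendsto (fun y => y / (y + c + α)) atTop (𝓝 1) := by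
    have hlim := (tendsto_const_nhds (x := (1 : ℝ)).add
      ((tendsto_const_nhds (x := c + α)).div_atTop tendsto_id)).inv₀ (by norm_num)
    rw [add_zero, inv_one] at hlim
    refine hlim.congr' ?_
    filter_upwards [eventually_gt_atTop 0] with y hy
    simp only [id]
    field_simp
    ring
  have hlim := (hshift.mul (hbase.rpow_const (p := α) (Or.inl one_ne_zero))).div_const (exp (-α))
  rw [one_rpow, mul_one, div_self (exp_pos _).ne'] at hlim
  refine hlim.congr' ?_
  filter_upwards [eventually_gt_atTop 0, eventually_gt_atTop (-c - α)] with y hy hyα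
  simp only [Function.comp, id]
  rw [div_rpow hy.le (by linarith), add_right_comm y α c]
  have : 0 < (y + c + α) ^ α := rpow_pos_of_pos (by linarith) α
  field_simp

section Wfun

variable {v : ℝ → ℝ}

theorem Wfun_zero : Wfun v 0 = 0 := intervalIntegral.integral_same

theorem Wfun_nonneg (hpos : ∀ x, 0 ≤ x → 0 < v x) {t : ℝ} (ht : 0 ≤ t) : 0 ≤ Wfun v t :=
  intervalIntegral.integral_nonneg ht fun u hu => (inv_pos.2 (hpos u hu.1)).le

theorem intervalIntegrable_inv_of_monotoneOn (hpos : ∀ x, 0 ≤ x → 0 < v x)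
    (hmono : MonotoneOn v (Ici 0)) {a b : ℝ} (ha : 0 ≤ a) (hb : 0 ≤ b) :
    IntervalIntegrable (fun u => (v u)⁻¹) volume a b := by
  have hsub : uIcc a b ⊆ Ici 0 := fun x hx => le_trans (le_min ha hb) hx.1
  refine AntitoneOn.intervalIntegrable fun x hx y hy hxy => ?_
  exact inv_anti₀ (hpos x (hsub hx)) (hmono (hsub hx) (hsub hy) hxy)

theorem continuousOn_Wfun (hpos : ∀ x, 0 ≤ x → 0 < v x) (hmono : MonotoneOn v (Ici 0))
    {b : ℝ} (hb : 0 ≤ b) : ContinuousOn (Wfun v) (Icc 0 b) := by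
  have h := intervalIntegral.continuousOn_primitive_interval'
    (intervalIntegrable_inv_of_monotoneOn hpos hmono le_rfl hb) left_mem_uIcc
  rwa [uIcc_of_le hb] at h

theorem exists_Wfun_eq (hpos : ∀ x, 0 ≤ x → 0 < v x) (hmono : MonotoneOn v (Ici 0))
    {b q : ℝ} (hb : 0 ≤ b) (hq : q ∈ Icc 0 (Wfun v b)) : ∃ t ∈ Icc 0 b, Wfun v t = q :=
  intermediate_value_Icc hb (continuousOn_Wfun hpos hmono hb) (by rwa [Wfun_zero])

theorem Wfun_comp_sub_Wfun_comp (hpos : ∀ x, 0 ≤ x → 0 < v x)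
    (hmono : MonotoneOn v (Ici 0)) {T : ℝ → ℝ} {a b : ℝ} (hab : a ≤ b)
    (hT : ∀ y ∈ Icc a b, HasDerivAt T (v (T y)) y) (hT0 : ∀ y ∈ Icc a b, 0 ≤ T y) :
    Wfun v (T b) - Wfun v (T a) = b - a := by
  have hTcont : ContinuousOn T (Icc a b) := fun y hy => (hT y hy).continuousAt.continuousWithinAt
  have hsubst := integral_Icc_deriv_smul_of_deriv_nonneg (g := fun u => (v u)⁻¹) hTcont
    (fun y hy => hT y (Ioo_subset_Icc_self hy))
    (fun y hy => (hpos _ (hT0 y (Ioo_subset_Icc_self hy))).le) hab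
  have hTab : T a ≤ T b :=
    monotoneOn_of_hasDerivWithinAt_nonneg (convex_Icc a b) hTcont
      (fun y hy => (hT y (interior_subset hy)).hasDerivWithinAt)
      (fun y hy => (hpos _ (hT0 y (interior_subset hy))).le) ⟨le_rfl, hab⟩ ⟨hab, le_rfl⟩ hab
  have hone : ∫ y in Icc a b, v (T y) • (v (T y))⁻¹ = b - a := by
    simp_rw [smul_eq_mul]
    rw [setIntegral_congr_fun measurableSet_Icc
      (g := fun _ => (1 : ℝ)) fun y hy => mul_inv_cancel₀ (hpos _ (hT0 y hy)).ne']
    simp [hab]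
  rw [Wfun, Wfun, intervalIntegral.integral_interval_sub_left
    (intervalIntegrable_inv_of_monotoneOn hpos hmono le_rfl (le_trans (hT0 a ⟨le_rfl, hab⟩) hTab))
    (intervalIntegrable_inv_of_monotoneOn hpos hmono le_rfl (hT0 a ⟨le_rfl, hab⟩)),
    intervalIntegral.integral_of_le hTab, ← integral_Icc_eq_integral_Ioc, ← hsubst, hone]

theorem lintegral_Ioc_ofReal_inv_comp_lt_top {Winv : ℝ → ℝ} (hpos : ∀ x, 0 ≤ x → 0 < v x)
    (hmono : MonotoneOn v (Ici 0)) (hWinv0 : ∀ q, 0 ≤ q → 0 ≤ Winv q) {b α : ℝ} (hα : 0 ≤ α) :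
    ∫⁻ x in Ioc 0 b, ENNReal.ofReal (v (Winv (Wfun v x + α)))⁻¹ < ⊤ := by
  have hbound : ∀ x ∈ Ioc 0 b,
      ENNReal.ofReal (v (Winv (Wfun v x + α)))⁻¹ ≤ ENNReal.ofReal (v 0)⁻¹ := by
    intro x hx
    have hq : 0 ≤ Wfun v x + α := add_nonneg (Wfun_nonneg hpos hx.1.le) hα
    exact ENNReal.ofReal_le_ofReal <| inv_anti₀ (hpos 0 le_rfl) <|
      hmono self_mem_Ici (hWinv0 _ hq) (hWinv0 _ hq)
  calc ∫⁻ x in Ioc 0 b, ENNReal.ofReal (v (Winv (Wfun v x + α)))⁻¹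
      ≤ ∫⁻ _ in Ioc 0 b, ENNReal.ofReal (v 0)⁻¹ := setLIntegral_mono' measurableSet_Ioc hbound
    _ < ⊤ := by
      rw [setLIntegral_const, Real.volume_Ioc]
      exact ENNReal.mul_lt_top ENNReal.ofReal_lt_top ENNReal.ofReal_lt_top

end Wfun

theorem lintegral_Ioi_ofReal_rpow_lt_top_iff {y0 s : ℝ} (hy0 : 0 < y0) :
    ∫⁻ y in Ioi y0, ENNReal.ofReal (y ^ s) < ⊤ ↔ s < -1 := by
  rw [← integrableOn_Ioi_rpow_iff hy0, lt_top_iff_ne_top, IntegrableOn,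
    lintegral_ofReal_ne_top_iff_integrable]
  · exact (continuousOn_id.rpow_const fun y hy => Or.inl (lt_trans hy0 hy).ne').aestronglyMeasurable
      measurableSet_Ioi
  · exact ae_restrict_of_forall_mem measurableSet_Ioi fun y hy => rpow_nonneg (lt_trans hy0 hy).le s

theorem lintegral_Ioi_ofReal_lt_top_iff_of_rpow_bounds {f : ℝ → ℝ} {y0 A B s : ℝ}
    (hy0 : 0 < y0) (hA : 0 < A) (hlower : ∀ y ∈ Ioi y0, A * y ^ s ≤ f y)
    (hupper : ∀ y ∈ Ioi y0, f y ≤ B * y ^ s) :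
    ∫⁻ y in Ioi y0, ENNReal.ofReal (f y) < ⊤ ↔ s < -1 := by
  have hscale : ∀ K : ℝ, 0 ≤ K → ∫⁻ y in Ioi y0, ENNReal.ofReal (K * y ^ s)
      = ENNReal.ofReal K * ∫⁻ y in Ioi y0, ENNReal.ofReal (y ^ s) := fun K hK => by
    simp_rw [ENNReal.ofReal_mul hK]
    exact lintegral_const_mul' _ _ ENNReal.ofReal_ne_top
  rw [← lintegral_Ioi_ofReal_rpow_lt_top_iff hy0]
  constructor
  · intro hf
    have hle : ENNReal.ofReal A * ∫⁻ y in Ioi y0, ENNReal.ofReal (y ^ s)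
        ≤ ∫⁻ y in Ioi y0, ENNReal.ofReal (f y) := by
      rw [← hscale A hA.le]
      exact setLIntegral_mono' measurableSet_Ioi fun y hy => ENNReal.ofReal_le_ofReal (hlower y hy)
    exact ENNReal.lt_top_of_mul_ne_top_right (hle.trans_lt hf).ne (by simpa using hA)
  · intro hs
    have hB : 0 ≤ B := by
      have hy : y0 + 1 ∈ Ioi y0 := lt_add_one y0
      have hpow : 0 < (y0 + 1) ^ s := rpow_pos_of_pos (by linarith) s
      nlinarith [hlower _ hy, hupper _ hy]
    calc ∫⁻ y in Ioi y0, ENNReal.ofReal (f y)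
        ≤ ∫⁻ y in Ioi y0, ENNReal.ofReal (B * y ^ s) :=
          setLIntegral_mono' measurableSet_Ioi fun y hy => ENNReal.ofReal_le_ofReal (hupper y hy)
      _ < ⊤ := by
          rw [hscale B hB]
          exact ENNReal.mul_lt_top ENNReal.ofReal_lt_top hs

theorem eventually_lintegral_Ioi_ofReal_lt_top_iff {f : ℝ → ℝ} {C α : ℝ} (hC : 0 < C)
    (hf : Tendsto (fun y => f y / (C / y ^ α)) atTop (𝓝 1)) :
    ∀ᶠ y0 in atTop, (∫⁻ y in Ioi y0, ENNReal.ofReal (f y) < ⊤ ↔ 1 < α) := by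
  obtain ⟨a, ha⟩ := eventually_atTop.1 ((hf.eventually (Ioo_mem_nhds (by norm_num : (1 / 2 : ℝ) < 1)
    (by norm_num : (1 : ℝ) < 2))).and (eventually_gt_atTop 0))
  filter_upwards [eventually_ge_atTop a, eventually_gt_atTop 0] with y0 hy0a hy0
  have hbounds : ∀ y ∈ Ioi y0, C / 2 * y ^ (-α) ≤ f y ∧ f y ≤ 2 * C * y ^ (-α) := by
    intro y hy
    obtain ⟨⟨hlo, hhi⟩, hypos⟩ := ha y (hy0a.trans (le_of_lt hy))
    have hden : 0 < C / y ^ α := div_pos hC (rpow_pos_of_pos hypos α)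
    rw [lt_div_iff₀ hden] at hlo
    rw [div_lt_iff₀ hden] at hhi
    rw [div_eq_mul_inv C] at hlo hhi
    rw [rpow_neg hypos.le]
    constructor <;> linarith
  rw [lintegral_Ioi_ofReal_lt_top_iff_of_rpow_bounds hy0 (by positivity)
    (fun y hy => (hbounds y hy).1) (fun y hy => (hbounds y hy).2), neg_lt_neg_iff]

section Lambert

variable {L w : ℝ → ℝ} (hL' : ∀ x, 0 ≤ x → L (x * exp x) = x)
  (hw : ∀ x, 1 ≤ x → w x = x * (1 + L (log x)))

include hL' in
theorem lambert_log_rpow_self {z : ℝ} (hz : 1 ≤ z) : L (log (z ^ z)) = log z := by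
  have hz0 : 0 < z := by linarith
  have h := hL' (log z) (log_nonneg hz)
  rwa [exp_log hz0, mul_comm, ← log_rpow hz0] at h

include hL' hw in
theorem w_rpow_self {z : ℝ} (hz : 1 ≤ z) : w (z ^ z) = rpowSelfDeriv z := by
  rw [hw _ (one_le_rpow hz (by linarith)), lambert_log_rpow_self hL' hz, rpowSelfDeriv]

variable {Winv : ℝ → ℝ} (hpos : ∀ x, 0 ≤ x → 0 < w x) (hmono : MonotoneOn w (Ici 0))
  (hWinv : ∀ t, 0 ≤ t → Winv (Wfun w t) = t) {c : ℝ} (hc : Wfun w 1 + c = 1)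

include hL' hw hpos hmono hc

theorem Wfun_rpow_self_add {y : ℝ} (hy : 1 ≤ y + c) : Wfun w ((y + c) ^ (y + c)) = y := by
  have h := Wfun_comp_sub_Wfun_comp hpos hmono (T := fun x => x ^ x) hy
    (fun z hz => by
      rw [w_rpow_self hL' hw hz.1]
      exact hasDerivAt_rpow_self (by linarith [hz.1]))
    (fun z hz => rpow_nonneg (by linarith [hz.1]) z)
  simp only [one_rpow] at h
  linarith

include hWinv

theorem Winv_eq_rpow_self_add {y : ℝ} (hy : 1 ≤ y + c) : Winv y = (y + c) ^ (y + c) := by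
  conv_lhs => rw [← Wfun_rpow_self_add hL' hw hpos hmono hc hy]
  exact hWinv _ (rpow_nonneg (by linarith) _)

theorem w_Winv_eq {y : ℝ} (hy : 1 ≤ y + c) : w (Winv y) = rpowSelfDeriv (y + c) := by
  rw [Winv_eq_rpow_self_add hL' hw hpos hmono hWinv hc hy, w_rpow_self hL' hw hy]

theorem Winv_nonneg {q : ℝ} (hq : 0 ≤ q) : 0 ≤ Winv q := by
  rcases le_or_gt q (Wfun w 1) with hq1 | hq1
  · obtain ⟨t, ht, rfl⟩ := exists_Wfun_eq hpos hmono zero_le_one ⟨hq, hq1⟩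
    rw [hWinv t ht.1]
    exact ht.1
  · rw [Winv_eq_rpow_self_add hL' hw hpos hmono hWinv hc (by linarith)]
    exact rpow_nonneg (by linarith) _

theorem lintegral_Ioi_ofReal_inv_w_Winv_eq {y0 α : ℝ} (hy0 : 1 ≤ y0 + c) :
    ∫⁻ x in Ioi ((y0 + c) ^ (y0 + c)), ENNReal.ofReal (w (Winv (Wfun w x + α)))⁻¹
      = ∫⁻ y in Ioi y0, ENNReal.ofReal (w (Winv y) / w (Winv (y + α))) := by
  set T : ℝ → ℝ := fun y => (y + c) ^ (y + c)
  have hTderiv : ∀ y ∈ Ici y0, HasDerivAt T (rpowSelfDeriv (y + c)) y := fun y hy =>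
    HasDerivAt.comp_add_const y c (hasDerivAt_rpow_self (by linarith [mem_Ici.1 hy]))
  have hTmono : StrictMonoOn T (Ici y0) := fun a ha b hb hab =>
    strictMonoOn_rpow_self (mem_Ici.2 (by linarith [mem_Ici.1 ha]))
      (mem_Ici.2 (by linarith [mem_Ici.1 hb])) (by linarith)
  have himage : T '' Ioi y0 = Ioi (T y0) :=
    ContinuousOn.image_Ioi_of_strictMonoOn
      (fun y hy => (hTderiv y hy).continuousAt.continuousWithinAt) hTmono
      (tendsto_rpow_self_atTop.comp (tendsto_atTop_add_const_right _ c tendsto_id))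
  rw [← himage, lintegral_image_eq_lintegral_deriv_mul_of_monotoneOn measurableSet_Ioi
    (fun y hy => (hTderiv y (Ioi_subset_Ici_self hy)).hasDerivWithinAt)
    (hTmono.monotoneOn.mono Ioi_subset_Ici_self)]
  refine setLIntegral_congr_fun measurableSet_Ioi fun y hy => ?_
  have hy' : 1 ≤ y + c := by linarith [mem_Ioi.1 hy]
  rw [Wfun_rpow_self_add hL' hw hpos hmono hc hy', ← ENNReal.ofReal_mul (rpowSelfDeriv_pos hy').le,
    w_Winv_eq hL' hw hpos hmono hWinv hc hy', div_eq_mul_inv]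

theorem Ia_lt_top_iff {y0 α : ℝ} (hy0 : 1 ≤ y0 + c) (hα : 0 ≤ α) :
    Ia w Winv α < ⊤ ↔ ∫⁻ y in Ioi y0, ENNReal.ofReal (w (Winv y) / w (Winv (y + α))) < ⊤ := by
  have hx0 : 0 < (y0 + c) ^ (y0 + c) := rpow_pos_of_pos (by linarith) _
  rw [Ia, ← Ioc_union_Ioi_eq_Ioi hx0.le, lintegral_union measurableSet_Ioi
    (Ioc_disjoint_Ioi le_rfl), lintegral_Ioi_ofReal_inv_w_Winv_eq hL' hw hpos hmono hWinv hc hy0,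
    ENNReal.add_lt_top, and_iff_right]
  exact lintegral_Ioc_ofReal_inv_comp_lt_top hpos hmono
    (fun q hq => Winv_nonneg hL' hw hpos hmono hWinv hc hq) hα

end Lambert

theorem sInf_image_ofReal_Ioi (a : ℝ) : sInf (ENNReal.ofReal '' Ioi a) = ENNReal.ofReal a := by
  rw [← Monotone.map_csInf_of_continuousAt (f := ENNReal.ofReal)
    ENNReal.continuous_ofReal.continuousAt ENNReal.ofReal_mono nonempty_Ioi bddBelow_Ioi, csInf_Ioi]

theorem stmt7_general (L : ℝ → ℝ)
    (hL' : ∀ x : ℝ, 0 ≤ x → L (x * Real.exp x) = x)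
    (w : ℝ → ℝ)
    (hw : ∀ x : ℝ, 1 ≤ x → w x = x * (1 + L (Real.log x)))
    (hpos : ∀ x : ℝ, 0 ≤ x → 0 < w x)
    (hmono : MonotoneOn w (Ici (0:ℝ)))
    (Winv : ℝ → ℝ)
    (hWinv : ∀ t : ℝ, 0 ≤ t → Winv (Wfun w t) = t) :
    (∀ α : ℝ, 0 < α →
        Tendsto (fun y : ℝ =>
            (w (Winv y) / w (Winv (y + α))) / (Real.exp (-α) / y ^ α))
          atTop (nhds 1)) ∧
    alphac w Winv = 1 := by
  obtain ⟨c, hc⟩ : ∃ c, Wfun w 1 + c = 1 := ⟨1 - Wfun w 1, by ring⟩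
  have hratio : ∀ α : ℝ, 0 < α → Tendsto (fun y : ℝ =>
      (w (Winv y) / w (Winv (y + α))) / (exp (-α) / y ^ α)) atTop (𝓝 1) := fun α hα =>
    (tendsto_rpowSelfDeriv_shift_ratio c α).congr' <| by
      filter_upwards [eventually_ge_atTop (1 - c)] with y hy
      rw [w_Winv_eq hL' hw hpos hmono hWinv hc (by linarith),
        w_Winv_eq hL' hw hpos hmono hWinv hc (by linarith)]
  have hIa : ∀ α : ℝ, 0 < α → (Ia w Winv α < ⊤ ↔ 1 < α) := fun α hα => by
    obtain ⟨y0, hiff, hy0⟩ := ((eventually_lintegral_Ioi_ofReal_lt_top_iff (exp_pos (-α))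
      (hratio α hα)).and (eventually_ge_atTop (1 - c))).exists
    rw [Ia_lt_top_iff hL' hw hpos hmono hWinv hc (by linarith) hα.le, hiff]
  have hS : {α : ℝ | 0 < α ∧ Ia w Winv α < ⊤} = Ioi 1 := by
    ext α
    exact ⟨fun ⟨hα, hI⟩ => (hIa α hα).1 hI,
      fun h1 => ⟨by linarith [mem_Ioi.1 h1], (hIa α (by linarith [mem_Ioi.1 h1])).2 h1⟩⟩
  refine ⟨hratio, ?_⟩
  rw [alphac, hS, sInf_image_ofReal_Ioi, ENNReal.ofReal_one]

/-- for `w(x) = x (1 + L(log x))` for `x ≥ 1` (with `L` the Lambert function,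
`L(x) e^{L(x)} = x`), one has `w(W⁻¹(y))/w(W⁻¹(y+α)) ∼ e^{-α}/y^α` as `y → ∞` for every
`α > 0`; consequently `α_c(w) = 1`. -/
theorem stmt7 (L : ℝ → ℝ)
    (hL : ∀ x : ℝ, 0 ≤ x → L x * Real.exp (L x) = x)
    (hL' : ∀ x : ℝ, 0 ≤ x → L (x * Real.exp x) = x)
    (hLnonneg : ∀ x : ℝ, 0 ≤ x → 0 ≤ L x)
    (w : ℝ → ℝ)
    (hw : ∀ x : ℝ, 1 ≤ x → w x = x * (1 + L (Real.log x)))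
    (hpos : ∀ x : ℝ, 0 ≤ x → 0 < w x)
    (hmono : MonotoneOn w (Ici (0:ℝ)))
    (hWdiv : Tendsto (Wfun w) atTop atTop)
    (Winv : ℝ → ℝ)
    (hWinv : ∀ t : ℝ, 0 ≤ t → Winv (Wfun w t) = t)
    (hWinv' : ∀ y : ℝ, 0 ≤ y → Wfun w (Winv y) = y) :
    (∀ α : ℝ, 0 < α →
        Tendsto (fun y : ℝ =>
            (w (Winv y) / w (Winv (y + α))) / (Real.exp (-α) / y ^ α))
          atTop (nhds 1)) ∧
    alphac w Winv = 1 :=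
  stmt7_general L hL' w hw hpos hmono Winv hWinv
end
end

section
/- Define w₀(x) = (n!)² for x ∈ [((n-1)!)², (n!)²), n ≥ 1. Then liminf_{x→∞} w₀(x)/x = 1 and α_c(w₀) = 1. -/
open MeasureTheory Filter Topology Set
open scoped ENNReal NNReal

noncomputable section

/-!
Write `F n = (n!)²`, so that `w₀ = F (n+1)` on the block `[F n, F (n+1))`. Across that block `W`
grows by `(F (n+1) - F n) / F (n+1) ≤ 1`. Hence for `α ≥ 1` the point `W⁻¹(W x + α)` lies beyond the
block of `x`, the integrand is at most `1 / F (n+2)` there, and the block contributes at most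
`F (n+1) / F (n+2) = 1/(n+2)²`, which is summable. For `α < 1` and `x ∈ [F n, (1-α) F (n+1))`,
`W⁻¹(W x + α)` stays in the block, the integrand equals `1 / F (n+1)`, and the block contributes
about `1 - α - 1/(n+1)²`, which is not summable. Finally `w₀ x / x ≥ 1` for `x ≥ 1`, with
`w₀ x / x = 1 + 1/x` at the points `x = F (n+1) - 1`.
-/

def sqFact (n : ℕ) : ℝ := (Nat.factorial n : ℝ) ^ 2

lemma sqFact_succ (n : ℕ) : sqFact (n + 1) = ((n : ℝ) + 1) ^ 2 * sqFact n := by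
  simp only [sqFact, Nat.factorial_succ]
  push_cast
  ring

lemma one_le_sqFact (n : ℕ) : 1 ≤ sqFact n :=
  one_le_pow₀ (by exact_mod_cast n.factorial_pos)

lemma sqFact_pos (n : ℕ) : 0 < sqFact n := one_pos.trans_le (one_le_sqFact n)

lemma sqFact_mono : Monotone sqFact := fun _ _ h =>
  pow_le_pow_left₀ (Nat.cast_nonneg _) (by exact_mod_cast Nat.factorial_le h) 2

lemma four_mul_sqFact_succ_le (n : ℕ) : 4 * sqFact (n + 1) ≤ sqFact (n + 2) := by
  rw [show n + 2 = n + 1 + 1 from rfl, sqFact_succ (n + 1)]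
  have h4 : (4 : ℝ) ≤ (((n + 1 : ℕ) : ℝ) + 1) ^ 2 := by
    push_cast
    nlinarith [(n.cast_nonneg : (0 : ℝ) ≤ n)]
  exact mul_le_mul_of_nonneg_right h4 (sqFact_pos _).le

lemma sqFact_div_sqFact_succ (n : ℕ) : sqFact n / sqFact (n + 1) = (((n : ℝ) + 1) ^ 2)⁻¹ := by
  rw [sqFact_succ, div_mul_cancel_right₀ (sqFact_pos n).ne']

lemma tendsto_sqFact_atTop : Tendsto sqFact atTop atTop :=
  tendsto_atTop_mono (fun n => by
    have hn : (n : ℝ) ≤ Nat.factorial n := by exact_mod_cast n.self_le_factorial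
    exact hn.trans (le_self_pow₀ (by exact_mod_cast n.factorial_pos) two_ne_zero))
    tendsto_natCast_atTop_atTop

lemma exists_mem_Ico_sqFact {x : ℝ} (hx : 1 ≤ x) : ∃ n, x ∈ Ico (sqFact n) (sqFact (n + 1)) := by
  classical
  have hex : ∃ m, x < sqFact m := (tendsto_sqFact_atTop.eventually_gt_atTop x).exists
  obtain ⟨n, hn⟩ : ∃ n, Nat.find hex = n + 1 := Nat.exists_eq_succ_of_ne_zero fun h0 => by
    have h := Nat.find_spec hex
    rw [h0] at h
    simp [sqFact] at h
    linarith
  exact ⟨n, not_lt.1 (Nat.find_min hex (by omega)), hn ▸ Nat.find_spec hex⟩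

-- The step hypothesis of the theorem with `n` shifted by one, so that no truncated `n - 1` occurs.
def IsSqFactStep (w : ℝ → ℝ) : Prop :=
  ∀ n : ℕ, ∀ x ∈ Ico (sqFact n) (sqFact (n + 1)), w x = sqFact (n + 1)

lemma one_le_div_self_of_isSqFactStep {w : ℝ → ℝ} (hw : IsSqFactStep w) {x : ℝ} (hx : 1 ≤ x) :
    1 ≤ w x / x := by
  obtain ⟨n, hn⟩ := exists_mem_Ico_sqFact hx
  rw [hw n x hn, one_le_div (by linarith)]
  exact hn.2.le

lemma liminf_div_self_eq_one {w : ℝ → ℝ} (hw : IsSqFactStep w) :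
    liminf (fun x : ℝ => ENNReal.ofReal (w x / x)) atTop = 1 := by
  refine le_antisymm (le_of_forall_gt_imp_ge_of_dense fun b hb => ?_)
    (le_liminf_of_le (by isBoundedDefault) ((eventually_ge_atTop 1).mono fun x hx =>
      ENNReal.one_le_ofReal.2 (one_le_div_self_of_isSqFactStep hw hx)))
  set u : ℕ → ℝ := fun n => sqFact (n + 2) - 1
  have hu : Tendsto u atTop atTop :=
    tendsto_atTop_add_const_right _ _ (tendsto_sqFact_atTop.comp (tendsto_add_atTop_nat 2))
  have hwu : ∀ n, w (u n) / u n = 1 + (u n)⁻¹ := fun n => by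
    have hF := four_mul_sqFact_succ_le n
    have h1 := one_le_sqFact (n + 1)
    have hmem : u n ∈ Ico (sqFact (n + 1)) (sqFact (n + 2)) :=
      ⟨by simp only [u]; linarith, by simp [u]⟩
    rw [hw (n + 1) _ hmem, show sqFact (n + 2) = u n + 1 by simp [u], add_div,
      div_self (by simp only [u]; linarith), one_div]
  have hlim : Tendsto (fun n => ENNReal.ofReal (w (u n) / u n)) atTop (𝓝 1) := by
    simp_rw [hwu]
    simpa using ENNReal.tendsto_ofReal ((tendsto_inv_atTop_zero.comp hu).const_add 1)
  exact liminf_le_of_frequently_le'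
    (hu.frequently ((hlim.eventually (gt_mem_nhds hb)).frequently.mono fun _ h => h.le))

section Weight

variable {w : ℝ → ℝ} (hpos : ∀ x, 0 ≤ x → 0 < w x) (hmono : MonotoneOn w (Ici 0))
include hpos hmono

lemma inv_weight_le_inv_weight_zero {u : ℝ} (hu : 0 ≤ u) : (w u)⁻¹ ≤ (w 0)⁻¹ :=
  inv_anti₀ (hpos 0 le_rfl) (hmono self_mem_Ici hu hu)

lemma intervalIntegrable_inv_weight {a b : ℝ} (ha : 0 ≤ a) (hab : a ≤ b) :
    IntervalIntegrable (fun u => (w u)⁻¹) volume a b := by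
  rw [intervalIntegrable_iff_integrableOn_Ioc_of_le hab]
  have hmeas : AEMeasurable w (volume.restrict (Ioc a b)) :=
    (aemeasurable_restrict_of_monotoneOn measurableSet_Ici hmono).mono_measure
      (Measure.restrict_mono (fun x hx => ha.trans hx.1.le) le_rfl)
  refine ⟨hmeas.inv.aestronglyMeasurable,
    HasFiniteIntegral.restrict_of_bounded (C := (w 0)⁻¹) measure_Ioc_lt_top ?_⟩
  filter_upwards [ae_restrict_mem measurableSet_Ioc] with u hu
  have hu0 : 0 ≤ u := ha.trans hu.1.le
  rw [Real.norm_of_nonneg (inv_nonneg.2 (hpos u hu0).le)]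
  exact inv_weight_le_inv_weight_zero hpos hmono hu0

lemma Wfun_add {a b : ℝ} (ha : 0 ≤ a) (hab : a ≤ b) :
    Wfun w b = Wfun w a + ∫ u in a..b, (w u)⁻¹ :=
  (intervalIntegral.integral_add_adjacent_intervals
    (intervalIntegrable_inv_weight hpos hmono le_rfl ha)
    (intervalIntegrable_inv_weight hpos hmono ha hab)).symm

lemma Wfun_strictMonoOn : StrictMonoOn (Wfun w) (Ici 0) := fun a ha b _ hab => by
  rw [Wfun_add hpos hmono ha hab.le, lt_add_iff_pos_right]
  exact intervalIntegral.intervalIntegral_pos_of_pos_on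
    (intervalIntegrable_inv_weight hpos hmono ha hab.le)
    (fun u hu => inv_pos.2 (hpos u (le_trans ha hu.1.le))) hab

lemma Wfun_nonneg_s11 {x : ℝ} (hx : 0 ≤ x) : 0 ≤ Wfun w x := by
  simpa [Wfun] using (Wfun_strictMonoOn hpos hmono).monotoneOn self_mem_Ici hx hx

lemma Wfun_eq_add_div_of_eqOn_Ico {x b c : ℝ} (hx : 0 ≤ x) (hxb : x ≤ b)
    (hc : ∀ u ∈ Ico x b, w u = c) : Wfun w b = Wfun w x + (b - x) / c := by
  rw [Wfun_add hpos hmono hx hxb, intervalIntegral.integral_of_le hxb,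
    integral_Ioc_eq_integral_Ioo,
    setIntegral_congr_fun measurableSet_Ioo (g := fun _ => c⁻¹)
      fun u hu => by rw [hc u (Ioo_subset_Ico_self hu)]]
  simp [hxb, div_eq_mul_inv]

lemma le_Winv_iff (hWdiv : Tendsto (Wfun w) atTop atTop) {Winv : ℝ → ℝ}
    (hWinv : ∀ t, 0 ≤ t → Winv (Wfun w t) = t) {t y : ℝ} (ht : 0 ≤ t) (hy : 0 ≤ y) :
    t ≤ Winv y ↔ Wfun w t ≤ y := by
  obtain ⟨b, hWb, hb⟩ := ((hWdiv.eventually_ge_atTop y).and (eventually_ge_atTop 0)).exists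
  have hcont : ContinuousOn (Wfun w) (Icc 0 b) := by
    have h := intervalIntegral.continuousOn_primitive_interval'
      (intervalIntegrable_inv_weight hpos hmono le_rfl hb) left_mem_uIcc
    rwa [uIcc_of_le hb] at h
  obtain ⟨s, hs, rfl⟩ : ∃ s ∈ Icc 0 b, Wfun w s = y :=
    intermediate_value_Icc hb hcont ⟨by simpa [Wfun] using hy, hWb⟩
  rw [hWinv s hs.1, (Wfun_strictMonoOn hpos hmono).le_iff_le ht hs.1]

end Weight

section Step

variable {w : ℝ → ℝ} (hpos : ∀ x, 0 ≤ x → 0 < w x) (hmono : MonotoneOn w (Ici 0))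
  (hw : IsSqFactStep w) {Winv : ℝ → ℝ}
  (hWinv_le : ∀ t y, 0 ≤ t → 0 ≤ y → (t ≤ Winv y ↔ Wfun w t ≤ y))
include hpos hmono hw

lemma Wfun_sqFact_succ {n : ℕ} {x : ℝ} (hx : x ∈ Icc (sqFact n) (sqFact (n + 1))) :
    Wfun w (sqFact (n + 1)) = Wfun w x + (sqFact (n + 1) - x) / sqFact (n + 1) :=
  Wfun_eq_add_div_of_eqOn_Ico hpos hmono ((sqFact_pos n).le.trans hx.1) hx.2
    fun u hu => hw n u ⟨hx.1.trans hu.1, hu.2⟩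

include hWinv_le

lemma sqFact_add_two_le_weight_Winv {α : ℝ} (hα : 1 ≤ α) {n : ℕ} {x : ℝ}
    (hx : x ∈ Ico (sqFact n) (sqFact (n + 1))) :
    sqFact (n + 2) ≤ w (Winv (Wfun w x + α)) := by
  have hx0 : 0 ≤ x := by linarith [one_le_sqFact n, hx.1]
  have hF := sqFact_pos (n + 1)
  have hjump : Wfun w (sqFact (n + 1)) ≤ Wfun w x + α := by
    have h1 : (sqFact (n + 1) - x) / sqFact (n + 1) ≤ 1 := by
      rw [div_le_one hF]
      linarith [hx.1, one_le_sqFact n]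
    rw [Wfun_sqFact_succ hpos hmono hw (Ico_subset_Icc_self hx)]
    linarith
  have hle : sqFact (n + 1) ≤ Winv (Wfun w x + α) :=
    (hWinv_le _ _ hF.le (by linarith [Wfun_nonneg_s11 hpos hmono hx0])).2 hjump
  have hstep : w (sqFact (n + 1)) = sqFact (n + 2) :=
    hw (n + 1) _ ⟨le_rfl, by linarith [four_mul_sqFact_succ_le n]⟩
  exact hstep ▸ hmono hF.le (hF.le.trans hle) hle

lemma weight_Winv_eq_sqFact_succ {α : ℝ} (hα : 0 ≤ α) {n : ℕ} {x : ℝ}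
    (hx : x ∈ Ico (sqFact n) ((1 - α) * sqFact (n + 1))) :
    w (Winv (Wfun w x + α)) = sqFact (n + 1) := by
  have hx0 : 0 ≤ x := by linarith [one_le_sqFact n, hx.1]
  have hF := sqFact_pos (n + 1)
  have hxF : x < sqFact (n + 1) := by nlinarith [hx.2]
  have hy : 0 ≤ Wfun w x + α := by linarith [Wfun_nonneg_s11 hpos hmono hx0]
  have hjump : Wfun w x + α < Wfun w (sqFact (n + 1)) := by
    have h1 : α < (sqFact (n + 1) - x) / sqFact (n + 1) := by
      rw [lt_div_iff₀ hF]
      linarith [hx.2]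
    rw [Wfun_sqFact_succ hpos hmono hw ⟨hx.1, hxF.le⟩]
    linarith
  have hge : x ≤ Winv (Wfun w x + α) := (hWinv_le _ _ hx0 hy).2 (by linarith)
  have hlt : Winv (Wfun w x + α) < sqFact (n + 1) :=
    not_le.1 fun h => (not_le.2 hjump) ((hWinv_le _ _ hF.le hy).1 h)
  exact hw n _ ⟨hx.1.trans hge, hlt⟩

lemma Ia_lt_top {α : ℝ} (hα : 1 ≤ α) : Ia w Winv α < ⊤ := by
  set f : ℝ → ℝ≥0∞ := fun x => ENNReal.ofReal (w (Winv (Wfun w x + α)))⁻¹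
  have hcover : Ioi (0 : ℝ) ⊆ Ioo 0 1 ∪ ⋃ n, Ico (sqFact n) (sqFact (n + 1)) := fun x hx => by
    rcases lt_or_ge x 1 with h | h
    · exact Or.inl ⟨hx, h⟩
    · exact Or.inr (mem_iUnion.2 (exists_mem_Ico_sqFact h))
  have hnear : ∫⁻ x in Ioo 0 1, f x < ⊤ := by
    refine (setLIntegral_mono' measurableSet_Ioo fun x hx => ?_).trans_lt
      ((setLIntegral_const _ (ENNReal.ofReal (w 0)⁻¹)).trans_lt ?_)
    · have hy : 0 ≤ Wfun w x + α := by linarith [Wfun_nonneg_s11 hpos hmono hx.1.le]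
      have h0 : 0 ≤ Winv (Wfun w x + α) :=
        (hWinv_le 0 _ le_rfl hy).2 (by simpa [Wfun] using hy)
      exact ENNReal.ofReal_le_ofReal (inv_weight_le_inv_weight_zero hpos hmono h0)
    · simp [Real.volume_Ioo]
  have hblock : ∀ n, ∫⁻ x in Ico (sqFact n) (sqFact (n + 1)), f x
      ≤ ENNReal.ofReal (sqFact (n + 1) / sqFact (n + 2)) := fun n => by
    have hF := sqFact_pos (n + 2)
    refine (setLIntegral_mono' measurableSet_Ico fun x hx =>
      ENNReal.ofReal_le_ofReal (inv_anti₀ hF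
        (sqFact_add_two_le_weight_Winv hpos hmono hw hWinv_le hα hx))).trans ?_
    rw [setLIntegral_const, Real.volume_Ico, ← ENNReal.ofReal_mul (inv_nonneg.2 hF.le),
      div_eq_inv_mul]
    gcongr
    linarith [sqFact_pos n]
  have hsum : Summable fun n => sqFact (n + 1) / sqFact (n + 2) := by
    have h := (summable_nat_add_iff 2).2 (Real.summable_nat_pow_inv.2 one_lt_two)
    refine h.congr fun n => ?_
    rw [sqFact_div_sqFact_succ]
    push_cast
    ring
  calc Ia w Winv α = ∫⁻ x in Ioi 0, f x := rfl
    _ ≤ (∫⁻ x in Ioo 0 1, f x) + ∑' n, ∫⁻ x in Ico (sqFact n) (sqFact (n + 1)), f x :=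
      (lintegral_mono_set hcover).trans
        ((lintegral_union_le _ _ _).trans (add_le_add_right (lintegral_iUnion_le _ _) _))
    _ ≤ (∫⁻ x in Ioo 0 1, f x) + ENNReal.ofReal (∑' n, sqFact (n + 1) / sqFact (n + 2)) := by
      rw [ENNReal.ofReal_tsum_of_nonneg (fun n => (div_pos (sqFact_pos _) (sqFact_pos _)).le) hsum]
      exact add_le_add_right (ENNReal.tsum_le_tsum hblock) _
    _ < ⊤ := ENNReal.add_lt_top.2 ⟨hnear, ENNReal.ofReal_lt_top⟩

lemma Ia_eq_top {α : ℝ} (hα₀ : 0 ≤ α) (hα₁ : α < 1) : Ia w Winv α = ⊤ := by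
  set f : ℝ → ℝ≥0∞ := fun x => ENNReal.ofReal (w (Winv (Wfun w x + α)))⁻¹
  set J : ℕ → Set ℝ := fun n => Ico (sqFact n) ((1 - α) * sqFact (n + 1))
  have hJ : ∀ n, J n ⊆ Ico (sqFact n) (sqFact (n + 1)) := fun n =>
    Ico_subset_Ico_right (by nlinarith [sqFact_pos (n + 1)])
  have hdisj : Pairwise (Function.onFun Disjoint J) := fun m n hmn => (sqFact_mono.pairwise_disjoint_on_Ico_succ hmn).mono (hJ m) (hJ n)
  set c : ℕ → ℝ := fun n => (1 - α) - (((n : ℝ) + 1) ^ 2)⁻¹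
  have hblock : ∀ n, ENNReal.ofReal (c n) ≤ ∫⁻ x in J n, f x := fun n => by
    have hF := sqFact_pos (n + 1)
    calc ENNReal.ofReal (c n) = ENNReal.ofReal (sqFact (n + 1))⁻¹ * volume (J n) := by
          rw [Real.volume_Ico, ← ENNReal.ofReal_mul (inv_nonneg.2 hF.le)]
          simp only [c]
          rw [← sqFact_div_sqFact_succ]
          field_simp
      _ = ∫⁻ _ in J n, ENNReal.ofReal (sqFact (n + 1))⁻¹ := (setLIntegral_const _ _).symm
      _ ≤ ∫⁻ x in J n, f x := setLIntegral_mono' measurableSet_Ico fun x hx => by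
          simp only [f, weight_Winv_eq_sqFact_succ hpos hmono hw hWinv_le hα₀ hx, le_rfl]
  have hc : Tendsto (fun n => ENNReal.ofReal (c n)) atTop (𝓝 (ENNReal.ofReal (1 - α))) := by
    refine ENNReal.tendsto_ofReal ?_
    simpa using (tendsto_one_div_add_atTop_nhds_zero_nat.pow 2).const_sub (1 - α)
  have hsum : ∑' n, ENNReal.ofReal (c n) = ⊤ := by
    by_contra h
    have h0 := tendsto_nhds_unique hc (ENNReal.tendsto_atTop_zero_of_tsum_ne_top h)
    exact (ENNReal.ofReal_pos.2 (sub_pos.2 hα₁)).ne' h0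
  refine top_le_iff.1 (hsum ▸ ?_)
  calc ∑' n, ENNReal.ofReal (c n) ≤ ∑' n, ∫⁻ x in J n, f x := ENNReal.tsum_le_tsum hblock
    _ = ∫⁻ x in ⋃ n, J n, f x := (lintegral_iUnion (fun _ => measurableSet_Ico) hdisj f).symm
    _ ≤ ∫⁻ x in Ioi 0, f x := lintegral_mono_set (iUnion_subset fun n x hx =>
        (sqFact_pos n).trans_le (hJ n hx).1)

end Step

lemma alphac_eq_ofReal {v Winv : ℝ → ℝ} {c : ℝ} (hc : 0 < c)
    (hfin : ∀ α, c ≤ α → Ia v Winv α < ⊤) (htop : ∀ α, 0 < α → α < c → Ia v Winv α = ⊤) :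
    alphac v Winv = ENNReal.ofReal c := by
  refine IsGLB.sInf_eq (IsLeast.isGLB ⟨⟨c, ⟨hc, hfin c le_rfl⟩, rfl⟩, ?_⟩)
  rintro _ ⟨α, ⟨hα, hIa⟩, rfl⟩
  exact ENNReal.ofReal_le_ofReal (not_lt.1 fun h => hIa.ne (htop α hα h))

theorem stmt11_general (w0 : ℝ → ℝ)
    (hpos : ∀ x : ℝ, 0 ≤ x → 0 < w0 x)
    (hmono : MonotoneOn w0 (Ici (0:ℝ)))
    (hstep : ∀ n : ℕ, 1 ≤ n → ∀ x : ℝ,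
        ((Nat.factorial (n - 1) : ℝ)) ^ 2 ≤ x → x < ((Nat.factorial n : ℝ)) ^ 2 →
        w0 x = ((Nat.factorial n : ℝ)) ^ 2)
    (hWdiv : Tendsto (Wfun w0) atTop atTop)
    (Winv : ℝ → ℝ)
    (hWinv : ∀ t : ℝ, 0 ≤ t → Winv (Wfun w0 t) = t) :
    Filter.liminf (fun x : ℝ => ENNReal.ofReal (w0 x / x)) atTop = 1 ∧
    alphac w0 Winv = 1 := by
  have hw : IsSqFactStep w0 := fun n x hx => hstep (n + 1) n.succ_pos x hx.1 hx.2
  have hWinv_le : ∀ t y, 0 ≤ t → 0 ≤ y → (t ≤ Winv y ↔ Wfun w0 t ≤ y) :=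
    fun _ _ ht hy => le_Winv_iff hpos hmono hWdiv hWinv ht hy
  refine ⟨liminf_div_self_eq_one hw, ?_⟩
  simpa using alphac_eq_ofReal one_pos (fun α hα => Ia_lt_top hpos hmono hw hWinv_le hα)
    fun α hα₀ hα₁ => Ia_eq_top hpos hmono hw hWinv_le hα₀.le hα₁

/-- for the step weight `w₀(x) = (n!)²` on `[((n-1)!)², (n!)²)` (`n ≥ 1`),
one has `liminf_{x→∞} w₀(x)/x = 1` and `α_c(w₀) = 1`. -/
theorem stmt11 (w0 : ℝ → ℝ)
    (hpos : ∀ x : ℝ, 0 ≤ x → 0 < w0 x)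
    (hmono : MonotoneOn w0 (Ici (0:ℝ)))
    (hstep : ∀ n : ℕ, 1 ≤ n → ∀ x : ℝ,
        ((Nat.factorial (n - 1) : ℝ)) ^ 2 ≤ x → x < ((Nat.factorial n : ℝ)) ^ 2 →
        w0 x = ((Nat.factorial n : ℝ)) ^ 2)
    (hWdiv : Tendsto (Wfun w0) atTop atTop)
    (Winv : ℝ → ℝ)
    (hWinv : ∀ t : ℝ, 0 ≤ t → Winv (Wfun w0 t) = t)
    (hWinv' : ∀ y : ℝ, 0 ≤ y → Wfun w0 (Winv y) = y) :
    Filter.liminf (fun x : ℝ => ENNReal.ofReal (w0 x / x)) atTop = 1 ∧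
    alphac w0 Winv = 1 :=
  stmt11_general w0 hpos hmono hstep hWdiv Winv hWinv
end
end
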